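/- Under assumption (A1) and assuming Ξ_{p+1}(ℳ)/Ξ_p(ℳ) ≥ 1/√2, the quantity λ_p = Σ_{M ∈ 𝖬} η_p(M)·G_p(M), where G_p(M) = Φ_{p+1}(M)/Φ_p(M), satisfies λ_p ≥ n²/(4√2·(n²+1)). -/
import Mathlib


open Finset

/-- Under assumption (A1) for the weights at levels p and p+1 and assuming
Ξ_{p+1}(ℳ)/Ξ_p(ℳ) ≥ 1/√2, the quantity λ_p = η_p(G_p) satisfies
λ_p ≥ n²/(4√2(n²+1)). -/
theorem lambda_lower_bound
    {X ι : Type*} [Fintype X] [Fintype ι] [DecidableEq X] (n : ℕ)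
    (Ms : Finset X) (N : ι → Finset X)
    (φp φq : X → ℝ) (wp wq : ι → ℝ) (Φp Φq η G : X → ℝ)
    (hMs : Ms.Nonempty)
    (hφp : ∀ x, 0 < φp x) (hφq : ∀ x, 0 < φq x)
    (hwp : ∀ i, 0 < wp i) (hwq : ∀ i, 0 < wq i)
    (hdisj : ∀ i, Disjoint Ms (N i))
    (hdisjN : ∀ i j, i ≠ j → Disjoint (N i) (N j))
    (hcover : ∀ x, x ∈ Ms ∨ ∃ i, x ∈ N i)
    (hn : (Finset.univ.filter (fun i => (N i).Nonempty)).card = n ^ 2)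
    (hA1p : ∀ i, (N i).Nonempty →
      ((∑ y ∈ Ms, φp y) / (∑ y ∈ N i, φp y)) / 2 ≤ wp i ∧
        wp i ≤ 2 * ((∑ y ∈ Ms, φp y) / (∑ y ∈ N i, φp y)))
    (hA1q : ∀ i, (N i).Nonempty →
      ((∑ y ∈ Ms, φq y) / (∑ y ∈ N i, φq y)) / 2 ≤ wq i ∧
        wq i ≤ 2 * ((∑ y ∈ Ms, φq y) / (∑ y ∈ N i, φq y)))
    (hΦpM : ∀ x ∈ Ms, Φp x = φp x)
    (hΦpN : ∀ i, ∀ x ∈ N i, Φp x = φp x * wp i)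
    (hΦqM : ∀ x ∈ Ms, Φq x = φq x)
    (hΦqN : ∀ i, ∀ x ∈ N i, Φq x = φq x * wq i)
    (hη : ∀ x, η x = Φp x / ∑ y, Φp y)
    (hG : ∀ x, G x = Φq x / Φp x)
    (hratio : (∑ y ∈ Ms, φq y) / (∑ y ∈ Ms, φp y) ≥ 1 / Real.sqrt 2) :
    ∑ x, η x * G x ≥ (n : ℝ) ^ 2 / (4 * Real.sqrt 2 * ((n : ℝ) ^ 2 + 1)) := by
  classical
  set A := ∑ y ∈ Ms, φp y with hA
  set B := ∑ y ∈ Ms, φq y with hB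
  have hApos : 0 < A := Finset.sum_pos (fun x _ => hφp x) hMs
  have hBpos : 0 < B := Finset.sum_pos (fun x _ => hφq x) hMs
  have huniv : (Finset.univ : Finset X) = Ms ∪ Finset.univ.biUnion N := by
    ext x
    simp only [Finset.mem_univ, true_iff, Finset.mem_union, Finset.mem_biUnion]
    rcases hcover x with h | ⟨i, hi⟩
    · exact Or.inl h
    · exact Or.inr ⟨i, trivial, hi⟩
  have hsplit : ∀ f : X → ℝ, ∑ x, f x = ∑ x ∈ Ms, f x + ∑ i, ∑ x ∈ N i, f x := by
    intro f
    rw [huniv, Finset.sum_union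
        ((Finset.disjoint_biUnion_right _ _ _).mpr (fun i _ => hdisj i)),
      Finset.sum_biUnion (fun i _ j _ hij => hdisjN i j hij)]
  set F := Finset.univ.filter (fun i => (N i).Nonempty) with hF
  have hΦppos : ∀ x, 0 < Φp x := by
    intro x
    rcases hcover x with h | ⟨i, hi⟩
    · rw [hΦpM x h]; exact hφp x
    · rw [hΦpN i x hi]; exact mul_pos (hφp x) (hwp i)
  set Zp := ∑ y, Φp y with hZp
  set Zq := ∑ y, Φq y with hZq
  have hZpeq : Zp = A + ∑ i, wp i * ∑ y ∈ N i, φp y := by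
    rw [hZp, hsplit Φp]
    congr 1
    · exact Finset.sum_congr rfl hΦpM
    · refine Finset.sum_congr rfl (fun i _ => ?_)
      rw [Finset.sum_congr rfl (hΦpN i), ← Finset.sum_mul, mul_comm]
  have hZqeq : Zq = B + ∑ i, wq i * ∑ y ∈ N i, φq y := by
    rw [hZq, hsplit Φq]
    congr 1
    · exact Finset.sum_congr rfl hΦqM
    · refine Finset.sum_congr rfl (fun i _ => ?_)
      rw [Finset.sum_congr rfl (hΦqN i), ← Finset.sum_mul, mul_comm]
  have hzero_p : ∀ i ∉ F, wp i * ∑ y ∈ N i, φp y = 0 := by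
    intro i hi
    have : N i = ∅ := by
      by_contra h
      exact hi (Finset.mem_filter.mpr ⟨Finset.mem_univ i, Finset.nonempty_iff_ne_empty.mpr h⟩)
    simp [this]
  have hzero_q : ∀ i ∉ F, wq i * ∑ y ∈ N i, φq y = 0 := by
    intro i hi
    have : N i = ∅ := by
      by_contra h
      exact hi (Finset.mem_filter.mpr ⟨Finset.mem_univ i, Finset.nonempty_iff_ne_empty.mpr h⟩)
    simp [this]
  set m := ((n : ℝ)) ^ 2 with hm
  have hmcard : (F.card : ℝ) = m := by rw [hF, hn]; push_cast; ring
  have hmnn : 0 ≤ m := by positivity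
  have hsum_p : ∑ i, wp i * ∑ y ∈ N i, φp y ≤ m * (2 * A) := by
    rw [← Finset.sum_subset (Finset.subset_univ F) (fun i _ hi => hzero_p i hi)]
    calc ∑ i ∈ F, wp i * ∑ y ∈ N i, φp y ≤ ∑ i ∈ F, 2 * A := by
          refine Finset.sum_le_sum (fun i hi => ?_)
          have hne : (N i).Nonempty := (Finset.mem_filter.mp hi).2
          have hSp : 0 < ∑ y ∈ N i, φp y := Finset.sum_pos (fun x _ => hφp x) hne
          have h2 := (hA1p i hne).2
          rw [mul_div_assoc'] at h2
          calc wp i * ∑ y ∈ N i, φp y ≤ (2 * A / ∑ y ∈ N i, φp y) * ∑ y ∈ N i, φp y :=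
                mul_le_mul_of_nonneg_right h2 hSp.le
            _ = 2 * A := div_mul_cancel₀ _ hSp.ne'
      _ = m * (2 * A) := by rw [Finset.sum_const, nsmul_eq_mul, hmcard]
  have hsum_q : m * (B / 2) ≤ ∑ i, wq i * ∑ y ∈ N i, φq y := by
    rw [← Finset.sum_subset (Finset.subset_univ F) (fun i _ hi => hzero_q i hi)]
    calc m * (B / 2) = ∑ i ∈ F, B / 2 := by rw [Finset.sum_const, nsmul_eq_mul, hmcard]
      _ ≤ ∑ i ∈ F, wq i * ∑ y ∈ N i, φq y := by
          refine Finset.sum_le_sum (fun i hi => ?_)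
          have hne : (N i).Nonempty := (Finset.mem_filter.mp hi).2
          have hSq : 0 < ∑ y ∈ N i, φq y := Finset.sum_pos (fun x _ => hφq x) hne
          have h1 := (hA1q i hne).1
          calc B / 2 = (B / ∑ y ∈ N i, φq y) / 2 * ∑ y ∈ N i, φq y := by
                field_simp
            _ ≤ wq i * ∑ y ∈ N i, φq y := mul_le_mul_of_nonneg_right h1 hSq.le
  have hZppos : 0 < Zp := by
    obtain ⟨x0, _⟩ := hMs
    have : Nonempty X := ⟨x0⟩
    exact Finset.sum_pos (fun x _ => hΦppos x) Finset.univ_nonempty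
  have hZple : Zp ≤ A * (1 + 2 * m) := by rw [hZpeq]; nlinarith
  have hZqge : B * (1 + m / 2) ≤ Zq := by rw [hZqeq]; nlinarith
  have hsum : ∑ x, η x * G x = Zq / Zp := by
    rw [hZq, Finset.sum_div]
    refine Finset.sum_congr rfl (fun x _ => ?_)
    rw [hη, hG, div_mul_div_comm, mul_comm Zp (Φp x)]
    exact mul_div_mul_left _ _ (hΦppos x).ne'
  set s := Real.sqrt 2 with hs
  have hspos : 0 < s := Real.sqrt_pos.mpr (by norm_num)
  have hs2 : s * s = 2 := Real.mul_self_sqrt (by norm_num)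
  have hAB : A ≤ s * B := by
    have h := hratio
    rw [ge_iff_le, div_le_div_iff₀ hspos hApos, one_mul] at h
    linarith
  clear_value A B F Zp Zq m s
  rw [hsum, ge_iff_le, div_le_div_iff₀ (by positivity) hZppos]
  have key : m * (A * (1 + 2 * m)) ≤ (B * (1 + m / 2)) * (4 * s * (m + 1)) := by
    nlinarith [mul_nonneg hmnn (mul_nonneg hBpos.le (by nlinarith : (0:ℝ) ≤ 1 + 2 * m)),
      mul_le_mul_of_nonneg_right hAB (mul_nonneg hmnn (by nlinarith : (0:ℝ) ≤ 1 + 2 * m)),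
      mul_pos hspos hBpos, sq_nonneg m]
  calc m * Zp ≤ m * (A * (1 + 2 * m)) := mul_le_mul_of_nonneg_left hZple hmnn
    _ ≤ (B * (1 + m / 2)) * (4 * s * (m + 1)) := key
    _ ≤ Zq * (4 * s * (m + 1)) := by
        refine mul_le_mul_of_nonneg_right hZqge (by positivity)
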